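/- arXiv:1504.00436 — 7 statements merged into one kernel-verified Lean document; each statement's English description precedes it below -/
import Mathlib

section
/- The map φ sending a dual matrix Â = A₀ + ε·A₁ ∈ SO(3,𝔻) to the real 6×6 block matrix [[A₀, 0],[A₁, A₀]] is an injective group homomorphism (φ(Â·B̂) = φ(Â)·φ(B̂) for all Â, B̂ ∈ SO(3,𝔻)), and its image is exactly the set of block matrices [[A, 0],[T·A, A]] with A·Aᵀ = I, det A = 1, and T a real 3×3 skew-symmetric matrix. -/
/-!
Under `Matrix.dualNumberEquiv`, the dual matrix `A₀ + ε·A₁` becomes the dual number `(A₀, A₁)`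
over real matrices, and these multiply by `(A₀, A₁)(B₀, B₁) = (A₀B₀, A₀B₁ + A₁B₀)`, exactly like
the block matrices `[[A₀, 0], [A₁, A₀]]`. Comparing real and `ε`-parts of `ÂÂᵀ = 1` gives
`A₀A₀ᵀ = 1` and `A₀A₁ᵀ + A₁A₀ᵀ = 0`, i.e. `T = A₁A₀ᵀ` is skew and `A₁ = T·A₀`. The real part of
`det Â` is `det A₀`, and `det Â = 1` is automatic once `det A₀ = 1`: `(det Â)² = det(ÂÂᵀ) = 1`,
and a dual number `1 + ε·b` squares to `1 + 2ε·b`.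
-/

open Matrix MvPolynomial

/-- The dual matrix `Â = A₀ + ε·A₁` over the dual numbers `𝔻 = ℝ[ε]/(ε²)`. -/
noncomputable def dualMat (A₀ A₁ : Matrix (Fin 3) (Fin 3) ℝ) :
    Matrix (Fin 3) (Fin 3) (DualNumber ℝ) :=
  A₀.map (algebraMap ℝ (DualNumber ℝ)) +
    (DualNumber.eps : DualNumber ℝ) • A₁.map (algebraMap ℝ (DualNumber ℝ))

/-- `(A₀, A₁)` represents an element `A₀ + ε·A₁` of `SO(3,𝔻)`. -/
noncomputable def SO3D (A₀ A₁ : Matrix (Fin 3) (Fin 3) ℝ) : Prop :=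
  dualMat A₀ A₁ * (dualMat A₀ A₁)ᵀ = 1 ∧ (dualMat A₀ A₁).det = 1

/-- The map `φ(A₀ + ε·A₁) = [[A₀, 0], [A₁, A₀]]` as a real `6×6` block matrix. -/
def phiBlock (A₀ A₁ : Matrix (Fin 3) (Fin 3) ℝ) :
    Matrix (Fin 3 ⊕ Fin 3) (Fin 3 ⊕ Fin 3) ℝ :=
  Matrix.fromBlocks A₀ 0 A₁ A₀

open TrivSqZeroExt

lemma DualNumber.eq_one_of_mul_self_eq_one {R : Type*} [CommRing R] [IsAddTorsionFree R]
    {x : DualNumber R} (hx : x * x = 1) (hfst : x.fst = 1) : x = 1 := by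
  refine TrivSqZeroExt.ext hfst ?_
  have hsnd : x.snd + x.snd = 0 := by simpa [hfst] using congrArg snd hx
  simpa using two_nsmul_eq_zero.mp ((two_nsmul x.snd).trans hsnd)

lemma DualNumber.fst_det {n R : Type*} [Fintype n] [DecidableEq n] [CommRing R]
    (M : Matrix n n (DualNumber R)) : M.det.fst = (M.map fst).det :=
  (fstHom R R R).toRingHom.map_det M

lemma dualNumberEquiv_dualMat (A₀ A₁ : Matrix (Fin 3) (Fin 3) ℝ) :
    dualNumberEquiv (dualMat A₀ A₁) = inl A₀ + inr A₁ := by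
  ext i j <;> simp [dualMat, algebraMap_eq_inl]

lemma dualMat_fst (A₀ A₁ : Matrix (Fin 3) (Fin 3) ℝ) : (dualMat A₀ A₁).map fst = A₀ := by
  ext i j; simp [dualMat, algebraMap_eq_inl]

lemma dualMat_inj {A₀ A₁ B₀ B₁ : Matrix (Fin 3) (Fin 3) ℝ} :
    dualMat A₀ A₁ = dualMat B₀ B₁ ↔ A₀ = B₀ ∧ A₁ = B₁ := by
  rw [← dualNumberEquiv.injective.eq_iff, dualNumberEquiv_dualMat, dualNumberEquiv_dualMat]
  simp [TrivSqZeroExt.ext_iff]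

lemma dualMat_mul (A₀ A₁ B₀ B₁ : Matrix (Fin 3) (Fin 3) ℝ) :
    dualMat A₀ A₁ * dualMat B₀ B₁ = dualMat (A₀ * B₀) (A₀ * B₁ + A₁ * B₀) := by
  apply dualNumberEquiv.injective
  rw [map_mul, dualNumberEquiv_dualMat, dualNumberEquiv_dualMat, dualNumberEquiv_dualMat]
  ext : 1 <;> simp [add_comm]

lemma dualMat_transpose (A₀ A₁ : Matrix (Fin 3) (Fin 3) ℝ) :
    (dualMat A₀ A₁)ᵀ = dualMat A₀ᵀ A₁ᵀ := by
  simp [dualMat, transpose_map]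

lemma dualMat_one : dualMat 1 0 = 1 := by
  simp [dualMat]

lemma SO3D_iff (A₀ A₁ : Matrix (Fin 3) (Fin 3) ℝ) :
    SO3D A₀ A₁ ↔ A₀ * A₀ᵀ = 1 ∧ A₀.det = 1 ∧ (A₁ * A₀ᵀ)ᵀ = -(A₁ * A₀ᵀ) := by
  have horth : dualMat A₀ A₁ * (dualMat A₀ A₁)ᵀ = 1 ↔
      A₀ * A₀ᵀ = 1 ∧ (A₁ * A₀ᵀ)ᵀ = -(A₁ * A₀ᵀ) := by
    rw [dualMat_transpose, dualMat_mul, ← dualMat_one, dualMat_inj, transpose_mul,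
      transpose_transpose, add_eq_zero_iff_eq_neg]
  have hdet_fst : (dualMat A₀ A₁).det.fst = A₀.det := by
    rw [DualNumber.fst_det, dualMat_fst]
  rw [SO3D, horth]
  constructor
  · rintro ⟨⟨hA, hskew⟩, hdet⟩
    exact ⟨hA, by rw [← hdet_fst, hdet, fst_one], hskew⟩
  · rintro ⟨hA, hdet, hskew⟩
    have hdet_sq : (dualMat A₀ A₁).det * (dualMat A₀ A₁).det = 1 := by
      simpa [det_mul, det_transpose] using congrArg det (horth.mpr ⟨hA, hskew⟩)
    exact ⟨⟨hA, hskew⟩, DualNumber.eq_one_of_mul_self_eq_one hdet_sq (hdet_fst.trans hdet)⟩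

lemma phiBlock_mul (A₀ A₁ B₀ B₁ : Matrix (Fin 3) (Fin 3) ℝ) :
    phiBlock A₀ A₁ * phiBlock B₀ B₁ = phiBlock (A₀ * B₀) (A₀ * B₁ + A₁ * B₀) := by
  simp [phiBlock, fromBlocks_multiply, add_comm]

lemma phiBlock_inj {A₀ A₁ B₀ B₁ : Matrix (Fin 3) (Fin 3) ℝ} :
    phiBlock A₀ A₁ = phiBlock B₀ B₁ ↔ A₀ = B₀ ∧ A₁ = B₁ := by
  rw [phiBlock, phiBlock, fromBlocks_inj]
  tauto

/-- `φ : SO(3,𝔻) → SE(3)` is an injective group homomorphism whose image consists of the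
block matrices `[[A,0],[T·A,A]]` with `A ∈ SO(3)` and `T` skew-symmetric. -/
theorem phiBlock_injective_hom_image :
    -- φ is multiplicative: the product `(A₀+εA₁)(B₀+εB₁) = A₀B₀ + ε(A₀B₁+A₁B₀)` maps to
    -- the product of the images
    (∀ A₀ A₁ B₀ B₁ : Matrix (Fin 3) (Fin 3) ℝ, SO3D A₀ A₁ → SO3D B₀ B₁ →
      phiBlock (A₀ * B₀) (A₀ * B₁ + A₁ * B₀) = phiBlock A₀ A₁ * phiBlock B₀ B₁) ∧
    -- φ is injective
    (∀ A₀ A₁ B₀ B₁ : Matrix (Fin 3) (Fin 3) ℝ, SO3D A₀ A₁ → SO3D B₀ B₁ →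
      phiBlock A₀ A₁ = phiBlock B₀ B₁ → A₀ = B₀ ∧ A₁ = B₁) ∧
    -- the image of φ is exactly the set of block matrices [[A,0],[T·A,A]] with
    -- A·Aᵀ = I, det A = 1 and T skew-symmetric
    (∀ M : Matrix (Fin 3 ⊕ Fin 3) (Fin 3 ⊕ Fin 3) ℝ,
      (∃ A₀ A₁ : Matrix (Fin 3) (Fin 3) ℝ, SO3D A₀ A₁ ∧ M = phiBlock A₀ A₁) ↔
      (∃ A T : Matrix (Fin 3) (Fin 3) ℝ, A * Aᵀ = 1 ∧ A.det = 1 ∧ Tᵀ = -T ∧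
        M = Matrix.fromBlocks A 0 (T * A) A)) := by
  refine ⟨fun A₀ A₁ B₀ B₁ _ _ => (phiBlock_mul A₀ A₁ B₀ B₁).symm,
    fun _ _ _ _ _ _ h => phiBlock_inj.mp h, fun M => ⟨?_, ?_⟩⟩
  · rintro ⟨A₀, A₁, hSO, rfl⟩
    obtain ⟨hA, hdet, hskew⟩ := (SO3D_iff A₀ A₁).mp hSO
    refine ⟨A₀, A₁ * A₀ᵀ, hA, hdet, hskew, ?_⟩
    rw [Matrix.mul_assoc, mul_eq_one_comm.mp hA, Matrix.mul_one, phiBlock]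
  · rintro ⟨A, T, hA, hdet, hskew, rfl⟩
    refine ⟨A, T * A, (SO3D_iff A (T * A)).mpr ⟨hA, hdet, ?_⟩, rfl⟩
    rwa [Matrix.mul_assoc, hA, Matrix.mul_one]
end

section
/- Let f ∈ ℝ[ω₁,…,ω_k] (each ωᵢ ∈ ℝ³) satisfy f(Aω₁,…,Aω_k) = f(ω₁,…,ω_k) for all A with A·Aᵀ = I and det A = 1. Then the polynomial g(ω₁,v₁,…,ω_k,v_k) := Σ_{i=1}^{k} ∇_{ωᵢ}f(ω₁,…,ω_k)·vᵢ is a k-fold invariant of the adjoint action of SE(3): for every A with A·Aᵀ = I, det A = 1, and every skew-symmetric T, g(Aω₁, TAω₁+Av₁, …, Aω_k, TAω_k+Av_k) = g(ω₁,v₁,…,ω_k,v_k); and likewise f itself, viewed as a polynomial in (ω₁,v₁,…,ω_k,v_k) depending only on the ωᵢ, is a k-fold invariant of this action. -/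
/-!
Differentiating the identity `f(A(ω + s v)) = f(ω + s v)` at `s = 0` shows that the gradient
pairing is equivariant: `∇f(Aω)·Av = ∇f(ω)·v`. Differentiating `f(exp(sT) ω) = f(ω)`, where
`exp(sT) ∈ SO(3)` for skew `T`, gives the infinitesimal invariance `∇f(ω)·Tω = 0`. The dual part at
the transformed twists is therefore `∇f(Aω)·(TAω) + ∇f(Aω)·(Av) = 0 + ∇f(ω)·v`.
-/

open Matrix MvPolynomial

/-- `g(ω₁,v₁,…,ω_k,v_k) = Σᵢ ∇_{ωᵢ}f(ω₁,…,ω_k)·vᵢ`, the dual part of the dualisation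
of `f`, as a function of the `k` twists `(ωᵢ, vᵢ)`. -/
noncomputable def dualPart {k : ℕ} (f : MvPolynomial (Fin k × Fin 3) ℝ)
    (ω v : Fin k → Fin 3 → ℝ) : ℝ :=
  ∑ i : Fin k, ∑ r : Fin 3,
    MvPolynomial.eval (fun p => ω p.1 p.2) (MvPolynomial.pderiv (i, r) f) * v i r

namespace MvPolynomial

section DirDeriv

variable {σ R : Type*} [Fintype σ] [CommSemiring R]

noncomputable def dirDeriv (f : MvPolynomial σ R) (x y : σ → R) : R :=
  ∑ p, eval x (pderiv p f) * y p

@[simp]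
theorem dirDeriv_C (a : R) (x y : σ → R) : (C a : MvPolynomial σ R).dirDeriv x y = 0 := by
  simp [dirDeriv]

@[simp]
theorem dirDeriv_X (n : σ) (x y : σ → R) : (X n : MvPolynomial σ R).dirDeriv x y = y n := by
  classical
  simp [dirDeriv, pderiv_X, Pi.single_apply]

theorem dirDeriv_add (f g : MvPolynomial σ R) (x y : σ → R) :
    (f + g).dirDeriv x y = f.dirDeriv x y + g.dirDeriv x y := by
  simp [dirDeriv, add_mul, Finset.sum_add_distrib]

theorem dirDeriv_mul (f g : MvPolynomial σ R) (x y : σ → R) :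
    (f * g).dirDeriv x y = f.dirDeriv x y * eval x g + eval x f * g.dirDeriv x y := by
  simp only [dirDeriv, pderiv_mul, map_add, map_mul, add_mul, Finset.sum_add_distrib,
    Finset.sum_mul, Finset.mul_sum]
  congr 1 <;> refine Finset.sum_congr rfl fun _ _ => by ring

theorem dirDeriv_add_right (f : MvPolynomial σ R) (x y z : σ → R) :
    f.dirDeriv x (y + z) = f.dirDeriv x y + f.dirDeriv x z := by
  simp [dirDeriv, mul_add, Finset.sum_add_distrib]

@[simp]
theorem dirDeriv_zero_right (f : MvPolynomial σ R) (x : σ → R) : f.dirDeriv x 0 = 0 := by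
  simp [dirDeriv]

end DirDeriv

section Calculus

variable {𝕜 σ : Type*} [NontriviallyNormedField 𝕜] [Fintype σ]

theorem _root_.HasDerivAt.mvPolynomial_eval (f : MvPolynomial σ 𝕜) {γ : 𝕜 → σ → 𝕜}
    {γ' : σ → 𝕜} {t : 𝕜} (hγ : HasDerivAt γ γ' t) :
    HasDerivAt (fun s => eval (γ s) f) (f.dirDeriv (γ t) γ') t := by
  induction f using MvPolynomial.induction_on with
  | C a => simpa using hasDerivAt_const t a
  | add f g hf hg =>
    simp only [map_add, dirDeriv_add]
    exact hf.add hg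
  | mul_X f n hf =>
    simp only [map_mul, eval_X, dirDeriv_mul, dirDeriv_X]
    exact hf.mul (hasDerivAt_pi.1 hγ n)

theorem dirDeriv_eq_of_eval_comp_eq (f : MvPolynomial σ 𝕜) {γ δ : 𝕜 → σ → 𝕜}
    {γ' δ' : σ → 𝕜} {t : 𝕜} (hγ : HasDerivAt γ γ' t) (hδ : HasDerivAt δ δ' t)
    (h : ∀ s, eval (γ s) f = eval (δ s) f) :
    f.dirDeriv (γ t) γ' = f.dirDeriv (δ t) δ' :=
  (hγ.mvPolynomial_eval f).unique (by simpa only [h] using hδ.mvPolynomial_eval f)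

end Calculus

end MvPolynomial

namespace Matrix

open NormedSpace

variable {m : Type*} [Fintype m] [DecidableEq m]

theorem exp_mul_transpose_exp_of_transpose_eq_neg {T : Matrix m m ℝ} (hT : Tᵀ = -T) :
    exp T * (exp T)ᵀ = 1 := by
  rw [← exp_transpose, hT, ← Matrix.exp_add_of_commute _ _ (Commute.refl T).neg_right,
    add_neg_cancel, exp_zero]

theorem det_exp_pos (X : Matrix m m ℝ) : 0 < (exp X).det := by
  have hsq : exp X = exp ((2⁻¹ : ℝ) • X) * exp ((2⁻¹ : ℝ) • X) := by
    rw [← Matrix.exp_add_of_commute _ _ (Commute.refl _), ← add_smul]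
    norm_num
  rw [hsq, det_mul]
  exact mul_self_pos.2 ((isUnit_iff_isUnit_det _).1 (isUnit_exp ((2⁻¹ : ℝ) • X))).ne_zero

theorem det_exp_of_transpose_eq_neg {T : Matrix m m ℝ} (hT : Tᵀ = -T) : (exp T).det = 1 := by
  have h := congrArg det (exp_mul_transpose_exp_of_transpose_eq_neg hT)
  rw [det_mul, det_transpose, det_one] at h
  exact (mul_self_eq_one_iff.1 h).resolve_right fun h' => by linarith [det_exp_pos T]

open scoped Matrix.Norms.Operator in
theorem hasDerivAt_exp_smul_mulVec (T : Matrix m m ℝ) (w : m → ℝ) (t : ℝ) :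
    HasDerivAt (fun s : ℝ => exp (s • T) *ᵥ w) ((exp (t • T) * T) *ᵥ w) t := by
  exact (LinearMap.toContinuousLinearMap ((mulVecBilin ℝ ℝ).flip w)).hasFDerivAt.comp_hasDerivAt t
    (hasDerivAt_exp_smul_const T t)

end Matrix

section Invariants

open NormedSpace

variable {ι m : Type*} [Fintype ι] [Fintype m] {f : MvPolynomial (ι × m) ℝ}

theorem dirDeriv_mulVec_eq_of_invariant {A : Matrix m m ℝ}
    (hA : ∀ ω : ι → m → ℝ, eval (fun p => (A *ᵥ ω p.1) p.2) f = eval (fun p => ω p.1 p.2) f)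
    (ω v : ι → m → ℝ) :
    f.dirDeriv (fun p => (A *ᵥ ω p.1) p.2) (fun p => (A *ᵥ v p.1) p.2) =
      f.dirDeriv (fun p => ω p.1 p.2) (fun p => v p.1 p.2) := by
  have hline (x y : ι × m → ℝ) : HasDerivAt (fun s : ℝ => x + s • y) y 0 := by
    simpa using ((hasDerivAt_id (0 : ℝ)).smul_const y).const_add x
  simpa using f.dirDeriv_eq_of_eval_comp_eq (hline _ _) (hline _ _) fun s => by
    have h := hA fun i => ω i + s • v i
    simp only [mulVec_add, mulVec_smul] at h
    exact h

theorem dirDeriv_mulVec_eq_zero_of_transpose_eq_neg [DecidableEq m]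
    (hf : ∀ A : Matrix m m ℝ, A * Aᵀ = 1 → A.det = 1 →
      ∀ ω : ι → m → ℝ, eval (fun p => (A *ᵥ ω p.1) p.2) f = eval (fun p => ω p.1 p.2) f)
    {T : Matrix m m ℝ} (hT : Tᵀ = -T) (ω : ι → m → ℝ) :
    f.dirDeriv (fun p => ω p.1 p.2) (fun p => (T *ᵥ ω p.1) p.2) = 0 := by
  have hskew (s : ℝ) : (s • T)ᵀ = -(s • T) := by rw [transpose_smul, hT, smul_neg]
  have hrot : HasDerivAt (fun (s : ℝ) (p : ι × m) => (exp (s • T) *ᵥ ω p.1) p.2)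
      (fun p => (T *ᵥ ω p.1) p.2) 0 :=
    hasDerivAt_pi.2 fun p => by
      simpa using hasDerivAt_pi.1 (hasDerivAt_exp_smul_mulVec T (ω p.1) 0) p.2
  simpa using f.dirDeriv_eq_of_eval_comp_eq hrot (hasDerivAt_const 0 fun p => ω p.1 p.2)
    fun s => hf _ (exp_mul_transpose_exp_of_transpose_eq_neg (hskew s))
      (det_exp_of_transpose_eq_neg (hskew s)) ω

theorem dualPart_eq_dirDeriv {k : ℕ} (f : MvPolynomial (Fin k × Fin 3) ℝ)
    (ω v : Fin k → Fin 3 → ℝ) :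
    dualPart f ω v = f.dirDeriv (fun p => ω p.1 p.2) (fun p => v p.1 p.2) := by
  rw [dualPart, dirDeriv, Fintype.sum_prod_type]

end Invariants

/-- If `f` is a `k`-fold invariant of `SO(3)`, then both the primal part `f` itself and the
dual part `g(ω,v) = Σᵢ ∇_{ωᵢ}f·vᵢ` of its dualisation are `k`-fold invariants of the
adjoint action of `SE(3)`: `(ωᵢ, vᵢ) ↦ (Aωᵢ, TAωᵢ + Avᵢ)` with `A ∈ SO(3)`, `T` skew. -/
theorem primal_and_dual_parts_SE3_invariant {k : ℕ}
    (f : MvPolynomial (Fin k × Fin 3) ℝ)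
    (hf : ∀ A : Matrix (Fin 3) (Fin 3) ℝ, A * Aᵀ = 1 → A.det = 1 →
      ∀ ω : Fin k → Fin 3 → ℝ,
        MvPolynomial.eval (fun p => A.mulVec (ω p.1) p.2) f
          = MvPolynomial.eval (fun p => ω p.1 p.2) f) :
    ∀ (A T : Matrix (Fin 3) (Fin 3) ℝ), A * Aᵀ = 1 → A.det = 1 → Tᵀ = -T →
      ∀ ω v : Fin k → Fin 3 → ℝ,
        dualPart f (fun i => A.mulVec (ω i))
            (fun i => T.mulVec (A.mulVec (ω i)) + A.mulVec (v i))
          = dualPart f ω v ∧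
        MvPolynomial.eval (fun p => A.mulVec (ω p.1) p.2) f
          = MvPolynomial.eval (fun p => ω p.1 p.2) f := by
  intro A T hA hdet hT ω v
  refine ⟨?_, hf A hA hdet ω⟩
  calc dualPart f (fun i => A *ᵥ ω i) (fun i => T *ᵥ (A *ᵥ ω i) + A *ᵥ v i)
      = f.dirDeriv (fun p => (A *ᵥ ω p.1) p.2) (fun p => (T *ᵥ (A *ᵥ ω p.1)) p.2)
          + f.dirDeriv (fun p => (A *ᵥ ω p.1) p.2) (fun p => (A *ᵥ v p.1) p.2) := by
        rw [dualPart_eq_dirDeriv, ← dirDeriv_add_right]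
        rfl
    _ = 0 + f.dirDeriv (fun p => ω p.1 p.2) (fun p => v p.1 p.2) := by
        rw [dirDeriv_mulVec_eq_zero_of_transpose_eq_neg hf hT fun i => A *ᵥ ω i,
          dirDeriv_mulVec_eq_of_invariant (hf A hA hdet)]
    _ = dualPart f ω v := by rw [zero_add, dualPart_eq_dirDeriv]
end

section
/- The cubic polynomials I₁₂₃ = det[ω₁ ω₂ ω₃] and Ĩ₁₂₃ = det[v₁ ω₂ ω₃] + det[ω₁ v₂ ω₃] + det[ω₁ ω₂ v₃] are odd invariants of the 3-fold action of E(3): for every real 3×3 matrix R with R·Rᵀ = I and every skew-symmetric T, replacing each (ωᵢ, vᵢ) by (Rωᵢ, TRωᵢ + Rvᵢ) multiplies both I₁₂₃ and Ĩ₁₂₃ by det R. In particular both are invariant under the 3-fold adjoint action of SE(3) (where det R = 1). -/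
open Matrix

/-- The `3×3` matrix with columns `a`, `b`, `c`. -/
def colMat (a b c : Fin 3 → ℝ) : Matrix (Fin 3) (Fin 3) ℝ :=
  (Matrix.of ![a, b, c])ᵀ

lemma colMat_mulVec (M : Matrix (Fin 3) (Fin 3) ℝ) (a b c : Fin 3 → ℝ) :
    colMat (M.mulVec a) (M.mulVec b) (M.mulVec c) = M * colMat a b c := by
  ext i j
  fin_cases j <;>
    simp [colMat, Matrix.vecHead, Matrix.vecTail, Matrix.transpose_apply, Matrix.mul_apply, Matrix.mulVec, dotProduct, Fin.sum_univ_three]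

lemma det_colMat_mulVec (M : Matrix (Fin 3) (Fin 3) ℝ) (a b c : Fin 3 → ℝ) :
    (colMat (M.mulVec a) (M.mulVec b) (M.mulVec c)).det = M.det * (colMat a b c).det := by
  rw [colMat_mulVec, Matrix.det_mul]

lemma det_colMat_eq (a b c : Fin 3 → ℝ) :
    (colMat a b c).det =
      a 0 * b 1 * c 2 - a 0 * b 2 * c 1 - a 1 * b 0 * c 2 + a 1 * b 2 * c 0 +
        a 2 * b 0 * c 1 - a 2 * b 1 * c 0 := by
  simp [colMat, Matrix.vecHead, Matrix.vecTail, Matrix.transpose_apply, Matrix.det_fin_three]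

lemma trace_sum (T : Matrix (Fin 3) (Fin 3) ℝ) (a b c : Fin 3 → ℝ) :
    (colMat (T.mulVec a) b c).det + (colMat a (T.mulVec b) c).det +
      (colMat a b (T.mulVec c)).det = T.trace * (colMat a b c).det := by
  simp [det_colMat_eq, Matrix.mulVec, dotProduct, Fin.sum_univ_three,
    Matrix.trace_fin_three]
  ring

lemma col1_add (x y b c : Fin 3 → ℝ) :
    (colMat (x + y) b c).det = (colMat x b c).det + (colMat y b c).det := by
  simp [det_colMat_eq]; ring

lemma col2_add (a x y c : Fin 3 → ℝ) :
    (colMat a (x + y) c).det = (colMat a x c).det + (colMat a y c).det := by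
  simp [det_colMat_eq]; ring

lemma col3_add (a b x y : Fin 3 → ℝ) :
    (colMat a b (x + y)).det = (colMat a b x).det + (colMat a b y).det := by
  simp [det_colMat_eq]; ring

/-- The cubic polynomials `I₁₂₃ = det[ω₁ ω₂ ω₃]` and
`Ĩ₁₂₃ = det[v₁ ω₂ ω₃] + det[ω₁ v₂ ω₃] + det[ω₁ ω₂ v₃]` are odd invariants of the 3-fold
action of `E(3)`: the transformation `(ωᵢ,vᵢ) ↦ (Rωᵢ, TRωᵢ + Rvᵢ)` multiplies both
by `det R`. In particular both are invariant under the 3-fold adjoint action of `SE(3)`. -/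
theorem cubic_invariants_odd_E3
    (R T : Matrix (Fin 3) (Fin 3) ℝ) (hR : R * Rᵀ = 1) (hT : Tᵀ = -T)
    (ω₁ ω₂ ω₃ v₁ v₂ v₃ : Fin 3 → ℝ) :
    (colMat (R.mulVec ω₁) (R.mulVec ω₂) (R.mulVec ω₃)).det
        = R.det * (colMat ω₁ ω₂ ω₃).det ∧
    ((colMat (T.mulVec (R.mulVec ω₁) + R.mulVec v₁) (R.mulVec ω₂) (R.mulVec ω₃)).det +
      (colMat (R.mulVec ω₁) (T.mulVec (R.mulVec ω₂) + R.mulVec v₂) (R.mulVec ω₃)).det +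
      (colMat (R.mulVec ω₁) (R.mulVec ω₂) (T.mulVec (R.mulVec ω₃) + R.mulVec v₃)).det)
        = R.det *
          ((colMat v₁ ω₂ ω₃).det + (colMat ω₁ v₂ ω₃).det + (colMat ω₁ ω₂ v₃).det) := by
  have htr : T.trace = 0 := by
    have h := congrArg Matrix.trace hT
    simp [Matrix.trace_transpose] at h
    linarith
  refine ⟨det_colMat_mulVec R ω₁ ω₂ ω₃, ?_⟩
  rw [col1_add, col2_add, col3_add]
  have hsum := trace_sum T (R.mulVec ω₁) (R.mulVec ω₂) (R.mulVec ω₃)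
  rw [htr, zero_mul] at hsum
  rw [det_colMat_mulVec R v₁ ω₂ ω₃, det_colMat_mulVec R ω₁ v₂ ω₃,
    det_colMat_mulVec R ω₁ ω₂ v₃]
  linarith
end

section
/- For any vectors ω₁, ω₂, ω₃, v₁, v₂, v₃ ∈ ℝ³, the following polynomial identity (the dual syzygy) holds: 2·I₁₂₃·Ĩ₁₂₃ = Ĩ₁₁I₂₂I₃₃ + I₁₁Ĩ₂₂I₃₃ + I₁₁I₂₂Ĩ₃₃ − Ĩ₁₁I₂₃² − 2I₁₁I₂₃Ĩ₂₃ + 2Ĩ₁₂I₁₃I₂₃ + 2I₁₂Ĩ₁₃I₂₃ + 2I₁₂I₁₃Ĩ₂₃ − 2I₁₂Ĩ₁₂I₃₃ − I₁₂²Ĩ₃₃ − 2I₁₃Ĩ₁₃I₂₂ − I₁₃²Ĩ₂₂, where I_{ij} = ωᵢ·ω_j, Ĩ_{ij} = ωᵢ·v_j + vᵢ·ω_j, I₁₂₃ = det[ω₁ ω₂ ω₃], and Ĩ₁₂₃ = det[v₁ ω₂ ω₃] + det[ω₁ v₂ ω₃] + det[ω₁ ω₂ v₃]. -/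
/-!
Over the dual numbers `ℝ[ε]`, let `D` be the matrix with columns `ωᵢ + ε vᵢ`. The Gram identity
`det (Dᵀ D) = (det D)²` holds over any commutative ring, so its `ε`-parts agree. The `ε`-part of
`det (A + ε V)` is Jacobi's derivative `∑ⱼ det (A with its j-th column replaced by that of V)`;
for `D` this is `Ĩ₁₂₃`, and for `Dᵀ D = (Iᵢⱼ) + ε (Ĩᵢⱼ)` it is the right-hand side.
-/

open Matrix

open DualNumber TrivSqZeroExt

section

variable {R : Type*} [CommRing R] {n : Type*} [Fintype n]

def Matrix.detDeriv [DecidableEq n] (A V : Matrix n n R) : R :=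
  ∑ j, (A.updateCol j fun i => V i j).det

theorem DualNumber.snd_prod {ι : Type*} [DecidableEq ι] (s : Finset ι) (f : ι → R[ε]) :
    (∏ i ∈ s, f i).snd = ∑ i ∈ s, ∏ k ∈ s, Function.update (fun k => (f k).fst) i (f i).snd k := by
  induction s using Finset.induction_on with
  | empty => simp
  | insert a s ha ih =>
    have hfst : (∏ i ∈ s, f i).fst = ∏ k ∈ s, (f k).fst := map_prod (fstHom R R R) f s
    have hne : ∀ i ∈ s, i ≠ a := fun i hi h => ha (h ▸ hi)
    rw [Finset.prod_insert ha, DualNumber.snd_mul, ih, hfst, Finset.sum_insert ha,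
      Finset.prod_insert ha, Function.update_self, Finset.mul_sum,
      Finset.prod_congr rfl fun k hk => Function.update_of_ne (hne k hk) _ _, add_comm]
    congr 1
    refine Finset.sum_congr rfl fun i hi => ?_
    rw [Finset.prod_insert ha, Function.update_of_ne (hne i hi).symm]

theorem DualNumber.fst_det_s9 [DecidableEq n] (A : Matrix n n R[ε]) :
    A.det.fst = (A.map fst).det :=
  (fstHom R R R).toRingHom.map_det A

theorem DualNumber.snd_det [DecidableEq n] (A : Matrix n n R[ε]) :
    A.det.snd = (A.map fst).detDeriv (A.map snd) := by
  simp only [det_apply, detDeriv, snd_sum]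
  rw [Finset.sum_comm]
  refine Finset.sum_congr rfl fun σ _ => ?_
  rw [Units.smul_def, snd_smul, snd_prod, ← Finset.smul_sum]
  congr 1
  refine Finset.sum_congr rfl fun j _ => Finset.prod_congr rfl fun i _ => ?_
  rcases eq_or_ne i j with rfl | hij
  · simp
  · simp [hij]

theorem DualNumber.map_fst_mul (M N : Matrix n n R[ε]) :
    (M * N).map fst = M.map fst * N.map fst := by
  ext i j
  simp [mul_apply, fst_sum]

theorem DualNumber.map_snd_mul (M N : Matrix n n R[ε]) :
    (M * N).map snd = M.map fst * N.map snd + M.map snd * N.map fst := by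
  ext i j
  simp [mul_apply, snd_sum, Finset.sum_add_distrib]

theorem Matrix.detDeriv_transpose_mul_self [DecidableEq n] (A V : Matrix n n R) :
    (Aᵀ * A).detDeriv (Aᵀ * V + Vᵀ * A) = 2 * A.det * A.detDeriv V := by
  let D : Matrix n n R[ε] := A.map inl + V.map inr
  have hfst : D.map fst = A := by ext; simp [D]
  have hsnd : D.map snd = V := by ext; simp [D]
  have h := congrArg snd (det_mul Dᵀ D)
  rw [det_transpose, DualNumber.snd_mul, snd_det, snd_det, fst_det_s9, map_snd_mul, map_fst_mul,
    transpose_map, transpose_map, hfst, hsnd] at h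
  rw [h]
  ring

end

theorem colMat_transpose_mul_colMat (a b c d e f : Fin 3 → ℝ) :
    (colMat a b c)ᵀ * colMat d e f =
      !![a ⬝ᵥ d, a ⬝ᵥ e, a ⬝ᵥ f; b ⬝ᵥ d, b ⬝ᵥ e, b ⬝ᵥ f; c ⬝ᵥ d, c ⬝ᵥ e, c ⬝ᵥ f] := by
  ext i j
  fin_cases i <;> fin_cases j <;> rfl

theorem detDeriv_colMat (a b c d e f : Fin 3 → ℝ) :
    (colMat a b c).detDeriv (colMat d e f) =
      (colMat d b c).det + (colMat a e c).det + (colMat a b f).det := by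
  simp only [detDeriv, Fin.sum_univ_three]
  congr 3 <;> ext i j <;> fin_cases j <;> rfl

/-- The dual syzygy obtained by dualising `I₁₂₃² = det(I_{ij})`. -/
theorem dual_syzygy (ω₁ ω₂ ω₃ v₁ v₂ v₃ : Fin 3 → ℝ) :
    -- abbreviations
    let I₁₁ := ω₁ ⬝ᵥ ω₁; let I₂₂ := ω₂ ⬝ᵥ ω₂; let I₃₃ := ω₃ ⬝ᵥ ω₃
    let I₁₂ := ω₁ ⬝ᵥ ω₂; let I₁₃ := ω₁ ⬝ᵥ ω₃; let I₂₃ := ω₂ ⬝ᵥ ω₃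
    let J₁₁ := ω₁ ⬝ᵥ v₁ + v₁ ⬝ᵥ ω₁; let J₂₂ := ω₂ ⬝ᵥ v₂ + v₂ ⬝ᵥ ω₂
    let J₃₃ := ω₃ ⬝ᵥ v₃ + v₃ ⬝ᵥ ω₃; let J₁₂ := ω₁ ⬝ᵥ v₂ + v₁ ⬝ᵥ ω₂
    let J₁₃ := ω₁ ⬝ᵥ v₃ + v₁ ⬝ᵥ ω₃; let J₂₃ := ω₂ ⬝ᵥ v₃ + v₂ ⬝ᵥ ω₃
    let I₁₂₃ := (colMat ω₁ ω₂ ω₃).det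
    let J₁₂₃ := (colMat v₁ ω₂ ω₃).det + (colMat ω₁ v₂ ω₃).det + (colMat ω₁ ω₂ v₃).det
    2 * I₁₂₃ * J₁₂₃ =
      J₁₁ * I₂₂ * I₃₃ + I₁₁ * J₂₂ * I₃₃ + I₁₁ * I₂₂ * J₃₃
        - J₁₁ * I₂₃ ^ 2 - 2 * I₁₁ * I₂₃ * J₂₃
        + 2 * J₁₂ * I₁₃ * I₂₃ + 2 * I₁₂ * J₁₃ * I₂₃ + 2 * I₁₂ * I₁₃ * J₂₃
        - 2 * I₁₂ * J₁₂ * I₃₃ - I₁₂ ^ 2 * J₃₃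
        - 2 * I₁₃ * J₁₃ * I₂₂ - I₁₃ ^ 2 * J₂₂ := by
  dsimp only
  rw [← detDeriv_colMat, ← detDeriv_transpose_mul_self, colMat_transpose_mul_colMat,
    colMat_transpose_mul_colMat, colMat_transpose_mul_colMat]
  -- normalizing `x ⬝ᵥ y` against `y ⬝ᵥ x` identifies the Gram entries `(i, j)` and `(j, i)`
  simp only [detDeriv, Fin.sum_univ_three, det_fin_three, Matrix.add_apply, of_apply, cons_val',
    cons_val_zero, cons_val_one, cons_val, cons_val_fin_one, updateCol_self, updateCol_ne,
    ne_eq, Fin.reduceEq, not_false_eq_true, dotProduct_comm]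
  ring
end

section
/- The twelve quadratic polynomials I_{ij} = ωᵢ·ω_j and Ĩ_{ij} = ωᵢ·v_j + vᵢ·ω_j (1 ≤ i ≤ j ≤ 3), viewed as elements of the polynomial ring ℝ[ω₁,v₁,ω₂,v₂,ω₃,v₃] in 18 variables, are algebraically independent over ℝ. -/
open Matrix MvPolynomial

/-- Variables: `(i, false, r)` is the `r`-th coordinate of `ωᵢ`, and `(i, true, r)` is the
`r`-th coordinate of `vᵢ`, for three twists `(ωᵢ, vᵢ)`, `i = 1,2,3`. -/
abbrev TwistVar := Fin 3 × Bool × Fin 3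

/-- `I_{ij} = ωᵢ·ω_j` as a polynomial in the 18 variables. -/
noncomputable def Iquad (i j : Fin 3) : MvPolynomial TwistVar ℝ :=
  ∑ r : Fin 3, X (i, false, r) * X (j, false, r)

/-- `Ĩ_{ij} = ωᵢ·v_j + vᵢ·ω_j` as a polynomial in the 18 variables. -/
noncomputable def Jquad (i j : Fin 3) : MvPolynomial TwistVar ℝ :=
  ∑ r : Fin 3, (X (i, false, r) * X (j, true, r) + X (i, true, r) * X (j, false, r))

/-! Polynomials that take algebraically independent values at some point of an extension field
of `ℝ` are themselves algebraically independent. So take independent transcendentals `g_ij`,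
`w_ij` in an algebraically closed field and arrange them as symmetric matrices `G`, `W`; then
`det G ≠ 0`. Over an algebraically closed field every symmetric matrix is a Gram matrix `Ω Ωᵀ`
(diagonalize by an orthogonal basis, then take square roots), and as `Ω` is invertible,
`Ω Vᵀ + V Ωᵀ = W` is solved by `Vᵀ = Ω⁻¹ W / 2`. The rows of `Ω` and `V` are twists at which
`I = G` and `Ĩ = W`. -/

theorem Matrix.IsSymm.exists_mul_transpose_self_eq {K n : Type*} [Field K] [IsAlgClosed K]
    [Invertible (2 : K)] [Fintype n] [DecidableEq n] {G : Matrix n n K} (hG : G.IsSymm) :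
    ∃ Ω : Matrix n n K, Ω * Ωᵀ = G := by
  obtain ⟨v, hv⟩ := LinearMap.BilinForm.exists_orthogonal_basis
    (LinearMap.BilinForm.isSymm_iff.1 (isSymm_toBilin'_iff_isSymm.2 hG))
  let e : Fin (Module.finrank K (n → K)) ≃ n := Fintype.equivOfCardEq (by simp)
  let b := v.reindex e
  choose s hs using fun i => IsAlgClosed.exists_eq_mul_self (toBilin' G (b i) (b i))
  have hdiag : LinearMap.BilinForm.toMatrix b (toBilin' G) = diagonal s * (diagonal s)ᵀ := by
    ext i j
    rw [diagonal_transpose, diagonal_mul_diagonal, LinearMap.BilinForm.toMatrix_apply]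
    rcases eq_or_ne i j with rfl | hij
    · rw [diagonal_apply_eq, hs]
    · rw [diagonal_apply_ne _ hij, Module.Basis.reindex_apply, Module.Basis.reindex_apply]
      exact hv (e.symm.injective.ne hij)
  set P := (Pi.basisFun K n).toMatrix b
  set Q := b.toMatrix (Pi.basisFun K n)
  have hPQ : P * Q = 1 := Module.Basis.toMatrix_mul_toMatrix_flip _ _
  have hcongr : Pᵀ * G * P = diagonal s * (diagonal s)ᵀ := by
    rw [← LinearMap.BilinForm.toMatrix'_toBilin' G, ← LinearMap.BilinForm.toMatrix_basisFun,
      LinearMap.BilinForm.toMatrix_mul_basis_toMatrix, hdiag]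
  refine ⟨Qᵀ * diagonal s, ?_⟩
  calc Qᵀ * diagonal s * (Qᵀ * diagonal s)ᵀ = Qᵀ * (Pᵀ * G * P) * Q := by
        rw [hcongr, transpose_mul, transpose_transpose]; simp only [Matrix.mul_assoc]
    _ = (P * Q)ᵀ * G * (P * Q) := by simp only [transpose_mul, Matrix.mul_assoc]
    _ = G := by rw [hPQ]; simp

theorem Matrix.exists_mul_transpose_add_mul_transpose_eq {R n : Type*} [CommRing R]
    [Invertible (2 : R)] [Fintype n] [DecidableEq n] {Ω W : Matrix n n R} (hΩ : IsUnit Ω.det)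
    (hW : W.IsSymm) : ∃ V : Matrix n n R, Ω * Vᵀ + V * Ωᵀ = W := by
  refine ⟨(Ω⁻¹ * (⅟2 : R) • W)ᵀ, ?_⟩
  have half : Ω * (Ω⁻¹ * (⅟2 : R) • W) = (⅟2 : R) • W := by
    rw [← Matrix.mul_assoc, mul_nonsing_inv _ hΩ, Matrix.one_mul]
  rw [transpose_transpose, ← transpose_transpose Ω, ← transpose_mul, transpose_transpose, half,
    transpose_smul, hW.eq, ← add_smul, invOf_two_add_invOf_two, one_smul]

namespace Matrix

variable {n α : Type*} [LinearOrder n]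

def symmOfUpper (c : {p : n × n // p.1 ≤ p.2} → α) : Matrix n n α :=
  of fun i j => c ⟨(min i j, max i j), min_le_max⟩

theorem symmOfUpper_apply_of_le (c : {p : n × n // p.1 ≤ p.2} → α) {i j : n} (h : i ≤ j) :
    symmOfUpper c i j = c ⟨(i, j), h⟩ := by
  simp only [symmOfUpper, of_apply, min_eq_left h, max_eq_right h]

theorem isSymm_symmOfUpper (c : {p : n × n // p.1 ≤ p.2} → α) : (symmOfUpper c).IsSymm := by
  ext i j
  simp only [symmOfUpper, transpose_apply, of_apply, min_comm, max_comm]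

theorem map_symmOfUpper {β : Type*} (c : {p : n × n // p.1 ≤ p.2} → α) (f : α → β) :
    (symmOfUpper c).map f = symmOfUpper (f ∘ c) :=
  rfl

theorem symmOfUpper_ite_eq_one [Zero α] [One α] :
    symmOfUpper (fun p : {p : n × n // p.1 ≤ p.2} => if p.1.1 = p.1.2 then (1 : α) else 0) = 1 := by
  ext i j
  rcases le_total i j with h | h
  · rw [symmOfUpper_apply_of_le _ h, one_apply]
  · rw [← (isSymm_symmOfUpper _).apply i j, ← isSymm_one.apply i j, symmOfUpper_apply_of_le _ h,
      one_apply]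

end Matrix

theorem AlgebraicIndependent.det_symmOfUpper_ne_zero {R A n : Type*} [CommRing R] [Nontrivial R]
    [CommRing A] [Algebra R A] [LinearOrder n] [Fintype n]
    {c : {p : n × n // p.1 ≤ p.2} → A} (hc : AlgebraicIndependent R c) :
    (symmOfUpper c).det ≠ 0 := by
  let P : MvPolynomial {p : n × n // p.1 ≤ p.2} R := (symmOfUpper X).det
  have hP : P ≠ 0 := by
    intro h
    have := congrArg (eval fun p : {p : n × n // p.1 ≤ p.2} => if p.1.1 = p.1.2 then 1 else 0) h
    rw [RingHom.map_det, RingHom.mapMatrix_apply, map_symmOfUpper] at this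
    simp [Function.comp_def, symmOfUpper_ite_eq_one] at this
  have hdet : (symmOfUpper c).det = aeval c P := by
    rw [AlgHom.map_det, AlgHom.mapMatrix_apply, map_symmOfUpper]
    congr; funext; simp
  rw [hdet]
  exact (map_ne_zero_iff _ hc).2 hP

section TwistPoint

variable {A : Type*} [CommRing A] [Algebra ℝ A]

def twistPoint (Ω V : Matrix (Fin 3) (Fin 3) A) : TwistVar → A :=
  fun x => if x.2.1 then V x.1 x.2.2 else Ω x.1 x.2.2

theorem aeval_twistPoint_Iquad (Ω V : Matrix (Fin 3) (Fin 3) A) (i j : Fin 3) :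
    aeval (twistPoint Ω V) (Iquad i j) = (Ω * Ωᵀ) i j := by
  simp [Iquad, twistPoint, mul_apply]

theorem aeval_twistPoint_Jquad (Ω V : Matrix (Fin 3) (Fin 3) A) (i j : Fin 3) :
    aeval (twistPoint Ω V) (Jquad i j) = (Ω * Vᵀ + V * Ωᵀ) i j := by
  simp [Jquad, twistPoint, mul_apply, Finset.sum_add_distrib]

end TwistPoint

noncomputable def quadraticInvariant (q : {p : Fin 3 × Fin 3 // p.1 ≤ p.2} × Bool) :
    MvPolynomial TwistVar ℝ :=
  if q.2 then Jquad q.1.1.1 q.1.1.2 else Iquad q.1.1.1 q.1.1.2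

theorem exists_aeval_quadraticInvariant_eq {K : Type*} [Field K] [IsAlgClosed K] [Algebra ℝ K]
    {c : {p : Fin 3 × Fin 3 // p.1 ≤ p.2} × Bool → K} (hc : AlgebraicIndependent ℝ c) :
    ∃ x : TwistVar → K, ∀ q, aeval x (quadraticInvariant q) = c q := by
  have : CharZero K := charZero_of_injective_algebraMap (algebraMap ℝ K).injective
  have : Invertible (2 : K) := invertibleOfNonzero two_ne_zero
  have hG : (symmOfUpper fun p => c (p, false)).det ≠ 0 :=
    (hc.comp _ (Prod.mk_left_injective false)).det_symmOfUpper_ne_zero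
  obtain ⟨Ω, hΩ⟩ := (isSymm_symmOfUpper fun p => c (p, false)).exists_mul_transpose_self_eq
  have hΩdet : IsUnit Ω.det := by
    refine isUnit_iff_ne_zero.2 fun h => hG ?_
    rw [← hΩ, det_mul, h, zero_mul]
  obtain ⟨V, hV⟩ := exists_mul_transpose_add_mul_transpose_eq hΩdet
    (isSymm_symmOfUpper fun p => c (p, true))
  refine ⟨twistPoint Ω V, ?_⟩
  rintro ⟨⟨⟨i, j⟩, hij⟩, _ | _⟩
  · rw [quadraticInvariant, if_neg Bool.false_ne_true, aeval_twistPoint_Iquad, hΩ,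
      symmOfUpper_apply_of_le _ hij]
  · rw [quadraticInvariant, if_pos rfl, aeval_twistPoint_Jquad, hV,
      symmOfUpper_apply_of_le _ hij]

/-- The twelve quadratic invariants `I_{ij}`, `Ĩ_{ij}` (`1 ≤ i ≤ j ≤ 3`) are algebraically
independent over `ℝ`. -/
theorem quadratic_invariants_algebraically_independent :
    AlgebraicIndependent ℝ
      (fun q : {p : Fin 3 × Fin 3 // p.1 ≤ p.2} × Bool =>
        if q.2 then Jquad q.1.1.1 q.1.1.2 else Iquad q.1.1.1 q.1.1.2) := by
  let S := MvPolynomial ({p : Fin 3 × Fin 3 // p.1 ≤ p.2} × Bool) ℝ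
  let K := AlgebraicClosure (FractionRing S)
  have hinj : Function.Injective (algebraMap S K) := by
    rw [IsScalarTower.algebraMap_eq S (FractionRing S) K, RingHom.coe_comp]
    exact (algebraMap (FractionRing S) K).injective.comp (IsFractionRing.injective S _)
  have hc := (algebraicIndependent_X _ ℝ).map' (f := IsScalarTower.toAlgHom ℝ S K) hinj
  obtain ⟨x, hx⟩ := exists_aeval_quadraticInvariant_eq hc
  exact .of_comp (aeval x) (by rwa [← funext hx] at hc)
end

section
/- Let (ωᵢ, vᵢ) ∈ ℝ³×ℝ³, i = 1,2,3, be three twists such that ω₁ and ω₂ are linearly independent. Then there exist a real 3×3 matrix R with R·Rᵀ = I and det R = 1, and a real 3×3 skew-symmetric matrix T, such that the transformed twists (ωᵢ', vᵢ') = (Rωᵢ, TRωᵢ + Rvᵢ) satisfy: the second and third coordinates of ω₁' are zero, the third coordinate of ω₂' is zero, the second and third coordinates of v₁' are zero, and the third coordinate of v₂' is zero. -/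
/-!
Choose the rotation `R` whose rows are the orthonormal frame `a, n ⨯₃ a, n` with `a` the unit
vector along `ω₁` and `n` the unit normal to the plane of `ω₁, ω₂` (nonzero by independence).
Then `Rω₁ = (|ω₁|, 0, 0)` and `Rω₂ = (*, γ, 0)` with `γ ≠ 0`. Writing the skew matrix as
`T x = t ⨯₃ x`, the three remaining conditions are a triangular linear system in `t` whose
pivots are `|ω₁|` and `γ`.
-/

open Matrix

noncomputable def unitVector {n : Type*} [Fintype n] (v : n → ℝ) : n → ℝ :=
  (√(v ⬝ᵥ v))⁻¹ • v

lemma dotProduct_self_pos {n R : Type*} [Fintype n] [Ring R] [LinearOrder R]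
    [IsStrictOrderedRing R] {v : n → R} (hv : v ≠ 0) : 0 < v ⬝ᵥ v :=
  (Finset.sum_nonneg fun i _ => mul_self_nonneg (v i)).lt_of_ne'
    (dotProduct_self_eq_zero.not.2 hv)

lemma unitVector_dotProduct_self {n : Type*} [Fintype n] {v : n → ℝ} (hv : v ≠ 0) :
    unitVector v ⬝ᵥ unitVector v = 1 := by
  have hpos := dotProduct_self_pos hv
  simp only [unitVector, smul_dotProduct, dotProduct_smul, smul_eq_mul, ← mul_assoc, ← mul_inv,
    Real.mul_self_sqrt hpos.le, inv_mul_cancel₀ hpos.ne']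

def crossMatrix {R : Type*} [CommRing R] (t : Fin 3 → R) : Matrix (Fin 3) (Fin 3) R :=
  !![0, -t 2, t 1; t 2, 0, -t 0; -t 1, t 0, 0]

lemma crossMatrix_transpose {R : Type*} [CommRing R] (t : Fin 3 → R) :
    (crossMatrix t)ᵀ = -crossMatrix t := by
  ext i j
  fin_cases i <;> fin_cases j <;> simp [crossMatrix]

lemma crossMatrix_mulVec {R : Type*} [CommRing R] (t x : Fin 3 → R) :
    crossMatrix t *ᵥ x = t ⨯₃ x := by
  ext i
  fin_cases i <;> simp [crossMatrix, cross_apply, mulVec, dotProduct, Fin.sum_univ_three] <;> ring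

lemma cross_dotProduct_self_left {R : Type*} [CommRing R] (v w : Fin 3 → R) :
    v ⨯₃ w ⬝ᵥ v = 0 := by
  rw [dotProduct_comm, dot_self_cross]

lemma cross_dotProduct_self_right {R : Type*} [CommRing R] (v w : Fin 3 → R) :
    v ⨯₃ w ⬝ᵥ w = 0 := by
  rw [dotProduct_comm, dot_cross_self]

section Frame

variable {R : Type*} [CommRing R]

def frame (a n : Fin 3 → R) : Matrix (Fin 3) (Fin 3) R :=
  of ![a, n ⨯₃ a, n]

lemma frame_mulVec (a n x : Fin 3 → R) :
    frame a n *ᵥ x = ![a ⬝ᵥ x, n ⨯₃ a ⬝ᵥ x, n ⬝ᵥ x] := by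
  ext i
  fin_cases i <;> rfl

variable {a n : Fin 3 → R}

lemma frame_mul_transpose (ha : a ⬝ᵥ a = 1) (hn : n ⬝ᵥ n = 1) (han : a ⬝ᵥ n = 0) :
    frame a n * (frame a n)ᵀ = 1 := by
  have hna : n ⬝ᵥ a = 0 := by rwa [dotProduct_comm]
  have hcc : n ⨯₃ a ⬝ᵥ n ⨯₃ a = 1 := by simp [cross_dot_cross, ha, hn, han, hna]
  ext i j
  change ![a, n ⨯₃ a, n] i ⬝ᵥ ![a, n ⨯₃ a, n] j = (1 : Matrix (Fin 3) (Fin 3) R) i j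
  fin_cases i <;> fin_cases j <;> simp [ha, hn, han, hna, hcc, dotProduct_comm]

lemma det_frame (ha : a ⬝ᵥ a = 1) (hn : n ⬝ᵥ n = 1) (han : a ⬝ᵥ n = 0) :
    (frame a n).det = 1 := by
  change det ![a, n ⨯₃ a, n] = 1
  rw [← triple_product_eq_det, triple_product_permutation, cross_dot_cross, ha, hn, han]
  ring

end Frame

lemma exists_rotation_to_coordinate_flag {ω₁ ω₂ : Fin 3 → ℝ}
    (hindep : LinearIndependent ℝ ![ω₁, ω₂]) :
    ∃ R : Matrix (Fin 3) (Fin 3) ℝ, R * Rᵀ = 1 ∧ R.det = 1 ∧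
      (R *ᵥ ω₁) 0 ≠ 0 ∧ (R *ᵥ ω₁) 1 = 0 ∧ (R *ᵥ ω₁) 2 = 0 ∧
      (R *ᵥ ω₂) 1 ≠ 0 ∧ (R *ᵥ ω₂) 2 = 0 := by
  have hω₁ : ω₁ ≠ 0 := by simpa using hindep.ne_zero 0
  have hc : ω₁ ⨯₃ ω₂ ≠ 0 := crossProduct_ne_zero_iff_linearIndependent.2 hindep
  have hcω₂ : ω₁ ⨯₃ ω₂ ⨯₃ ω₁ ⬝ᵥ ω₂ ≠ 0 := by
    rw [dotProduct_comm, triple_product_permutation]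
    exact (dotProduct_self_pos hc).ne'
  have hs₁ : √(ω₁ ⬝ᵥ ω₁) ≠ 0 := Real.sqrt_ne_zero'.2 (dotProduct_self_pos hω₁)
  have hsc : √(ω₁ ⨯₃ ω₂ ⬝ᵥ ω₁ ⨯₃ ω₂) ≠ 0 := Real.sqrt_ne_zero'.2 (dotProduct_self_pos hc)
  have han : unitVector ω₁ ⬝ᵥ unitVector (ω₁ ⨯₃ ω₂) = 0 := by simp [unitVector]
  refine ⟨frame (unitVector ω₁) (unitVector (ω₁ ⨯₃ ω₂)),
    frame_mul_transpose (unitVector_dotProduct_self hω₁) (unitVector_dotProduct_self hc) han,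
    det_frame (unitVector_dotProduct_self hω₁) (unitVector_dotProduct_self hc) han,
    ?_, ?_, ?_, ?_, ?_⟩ <;>
    simp [frame_mulVec, unitVector, hω₁, hs₁, hsc, hcω₂, cross_dotProduct_self_left,
      cross_dotProduct_self_right]

lemma exists_cross_add_normal_form {K : Type*} [Field K] {w₁ w₂ : Fin 3 → K}
    (hw₁₀ : w₁ 0 ≠ 0) (hw₁₁ : w₁ 1 = 0) (hw₁₂ : w₁ 2 = 0) (hw₂₁ : w₂ 1 ≠ 0) (hw₂₂ : w₂ 2 = 0)
    (p₁ p₂ : Fin 3 → K) :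
    ∃ t : Fin 3 → K, (t ⨯₃ w₁ + p₁) 1 = 0 ∧ (t ⨯₃ w₁ + p₁) 2 = 0 ∧ (t ⨯₃ w₂ + p₂) 2 = 0 := by
  set t₁ := p₁ 2 / w₁ 0
  refine ⟨![(t₁ * w₂ 0 - p₂ 2) / w₂ 1, t₁, -p₁ 1 / w₁ 0], ?_, ?_, ?_⟩ <;>
    simp [cross_apply, hw₁₁, hw₁₂, hw₂₂, t₁] <;> field_simp <;> ring

theorem normal_form_three_twists_general
    (ω₁ ω₂ v₁ v₂ : Fin 3 → ℝ)
    (hindep : LinearIndependent ℝ ![ω₁, ω₂]) :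
    ∃ R T : Matrix (Fin 3) (Fin 3) ℝ,
      R * Rᵀ = 1 ∧ R.det = 1 ∧ Tᵀ = -T ∧
      (R.mulVec ω₁) 1 = 0 ∧ (R.mulVec ω₁) 2 = 0 ∧
      (R.mulVec ω₂) 2 = 0 ∧
      (T.mulVec (R.mulVec ω₁) + R.mulVec v₁) 1 = 0 ∧
      (T.mulVec (R.mulVec ω₁) + R.mulVec v₁) 2 = 0 ∧
      (T.mulVec (R.mulVec ω₂) + R.mulVec v₂) 2 = 0 := by
  obtain ⟨R, hR, hdet, hω₁₀, hω₁₁, hω₁₂, hω₂₁, hω₂₂⟩ := exists_rotation_to_coordinate_flag hindep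
  obtain ⟨t, ht⟩ :=
    exists_cross_add_normal_form hω₁₀ hω₁₁ hω₁₂ hω₂₁ hω₂₂ (R *ᵥ v₁) (R *ᵥ v₂)
  refine ⟨R, crossMatrix t, hR, hdet, crossMatrix_transpose t, hω₁₁, hω₁₂, hω₂₂, ?_⟩
  simpa only [crossMatrix_mulVec] using ht

/-- Normal form for three twists: if `ω₁, ω₂` are linearly independent, there is a Euclidean
transformation `(R, T)` (with `R ∈ SO(3)` and `T` skew-symmetric) taking the twists
`(ωᵢ, vᵢ) ↦ (Rωᵢ, TRωᵢ + Rvᵢ)` to a form where `ω₁'` lies along the first axis, `ω₂'` lies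
in the plane of the first two axes, `v₁'` lies along the first axis and `v₂'` lies in the
plane of the first two axes. -/
theorem normal_form_three_twists
    (ω₁ ω₂ ω₃ v₁ v₂ v₃ : Fin 3 → ℝ)
    (hindep : LinearIndependent ℝ ![ω₁, ω₂]) :
    ∃ R T : Matrix (Fin 3) (Fin 3) ℝ,
      R * Rᵀ = 1 ∧ R.det = 1 ∧ Tᵀ = -T ∧
      (R.mulVec ω₁) 1 = 0 ∧ (R.mulVec ω₁) 2 = 0 ∧
      (R.mulVec ω₂) 2 = 0 ∧
      (T.mulVec (R.mulVec ω₁) + R.mulVec v₁) 1 = 0 ∧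
      (T.mulVec (R.mulVec ω₁) + R.mulVec v₁) 2 = 0 ∧
      (T.mulVec (R.mulVec ω₂) + R.mulVec v₂) 2 = 0 :=
  normal_form_three_twists_general ω₁ ω₂ v₁ v₂ hindep
end

section
/- Let f ∈ ℝ[ω₁,v₁,…,ω_k,v_k] be a k-fold invariant of the adjoint action of SE(3). Then for any two pairs (R₁,T₁) and (R₂,T₂) with Rₘ·Rₘᵀ = I, det Rₘ = −1, and Tₘ skew-symmetric (m = 1,2), the two polynomials obtained by substituting (ωᵢ,vᵢ) ↦ (Rₘωᵢ, TₘRₘωᵢ + Rₘvᵢ) into f coincide: f(R₁ω₁, T₁R₁ω₁+R₁v₁, …, R₁ω_k, T₁R₁ω_k+R₁v_k) = f(R₂ω₁, T₂R₂ω₁+R₂v₁, …, R₂ω_k, T₂R₂ω_k+R₂v_k) for all (ω₁,v₁,…,ω_k,v_k). -/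
/-!
Any two elements `(R₁, T₁)`, `(R₂, T₂)` of `E⁻(3)` differ by an element of `SE(3)`:
with `A = R₂ R₁ᵀ ∈ SO(3)` and the skew matrix `S = T₂ - A T₁ Aᵀ`, acting by `(A, S)` after
`(R₁, T₁)` is acting by `(R₂, T₂)`. Invariance of `f` under `(A, S)` then identifies the two
substitutions.
-/

open Matrix MvPolynomial

/-- Evaluate a polynomial in the `6k` twist variables at `k` twists `(ωᵢ, vᵢ)`;
the variable `(i, false, r)` is the `r`-th coordinate of `ωᵢ` and `(i, true, r)` the
`r`-th coordinate of `vᵢ`. -/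
noncomputable def evalT {k : ℕ} (f : MvPolynomial (Fin k × Bool × Fin 3) ℝ)
    (ω v : Fin k → Fin 3 → ℝ) : ℝ :=
  MvPolynomial.eval (fun p => if p.2.1 then v p.1 p.2.2 else ω p.1 p.2.2) f

/-- `f` is a `k`-fold invariant of the adjoint action of `SE(3)`:
`(ωᵢ, vᵢ) ↦ (Aωᵢ, TAωᵢ + Avᵢ)` for `A·Aᵀ = I`, `det A = 1`, `T` skew-symmetric. -/
def IsSE3Invariant {k : ℕ} (f : MvPolynomial (Fin k × Bool × Fin 3) ℝ) : Prop :=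
  ∀ (A T : Matrix (Fin 3) (Fin 3) ℝ), A * Aᵀ = 1 → A.det = 1 → Tᵀ = -T →
    ∀ ω v : Fin k → Fin 3 → ℝ,
      evalT f (fun i => A.mulVec (ω i))
        (fun i => T.mulVec (A.mulVec (ω i)) + A.mulVec (v i)) = evalT f ω v

namespace Matrix

variable {n α : Type*} [Fintype n] [CommRing α]

theorem transpose_conj_of_transpose_eq_neg (A : Matrix n n α) {T : Matrix n n α}
    (hT : Tᵀ = -T) : (A * T * Aᵀ)ᵀ = -(A * T * Aᵀ) := by
  rw [transpose_mul, transpose_mul, transpose_transpose, hT, Matrix.neg_mul, Matrix.mul_neg,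
    Matrix.mul_assoc]

variable [DecidableEq n]

theorem mul_transpose_mul_transpose_self {R₁ R₂ : Matrix n n α}
    (hR₁ : R₁ * R₁ᵀ = 1) (hR₂ : R₂ * R₂ᵀ = 1) :
    R₂ * R₁ᵀ * (R₂ * R₁ᵀ)ᵀ = 1 := by
  rw [transpose_mul, transpose_transpose, Matrix.mul_assoc, ← Matrix.mul_assoc R₁ᵀ,
    mul_eq_one_comm.mp hR₁, Matrix.one_mul, hR₂]

theorem det_mul_transpose_of_det_eq_neg_one {R₁ R₂ : Matrix n n α}
    (hdet₁ : R₁.det = -1) (hdet₂ : R₂.det = -1) : (R₂ * R₁ᵀ).det = 1 := by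
  rw [det_mul, det_transpose, hdet₁, hdet₂, neg_one_mul, neg_neg]

/-- Composition law of the adjoint action: `(A, S) · (R, T) = (A R, S + A T Aᵀ)`. -/
theorem mulVec_adjoint_comp {A : Matrix n n α} (hA : Aᵀ * A = 1) (S R T : Matrix n n α)
    (ω v : n → α) :
    S *ᵥ (A *ᵥ (R *ᵥ ω)) + A *ᵥ (T *ᵥ (R *ᵥ ω) + R *ᵥ v)
      = (S + A * T * Aᵀ) *ᵥ ((A * R) *ᵥ ω) + (A * R) *ᵥ v := by
  have hATA : A * T * Aᵀ * (A * R) = A * (T * R) := by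
    rw [Matrix.mul_assoc, ← Matrix.mul_assoc Aᵀ, hA, Matrix.one_mul, Matrix.mul_assoc]
  simp only [mulVec_add, add_mulVec, mulVec_mulVec, Matrix.add_mul, hATA, add_assoc]

end Matrix

/-- If `f` is a `k`-fold invariant of the adjoint action of `SE(3)`, then the substitution
of any two elements of `E⁻(3)` (orthogonal part of determinant `-1`) into `f` gives the
same polynomial function. -/
theorem SE3_invariant_Eminus_welldefined {k : ℕ}
    (f : MvPolynomial (Fin k × Bool × Fin 3) ℝ) (hf : IsSE3Invariant f)
    (R₁ T₁ R₂ T₂ : Matrix (Fin 3) (Fin 3) ℝ)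
    (hR₁ : R₁ * R₁ᵀ = 1) (hdet₁ : R₁.det = -1) (hT₁ : T₁ᵀ = -T₁)
    (hR₂ : R₂ * R₂ᵀ = 1) (hdet₂ : R₂.det = -1) (hT₂ : T₂ᵀ = -T₂) :
    ∀ ω v : Fin k → Fin 3 → ℝ,
      evalT f (fun i => R₁.mulVec (ω i))
          (fun i => T₁.mulVec (R₁.mulVec (ω i)) + R₁.mulVec (v i))
        = evalT f (fun i => R₂.mulVec (ω i))
          (fun i => T₂.mulVec (R₂.mulVec (ω i)) + R₂.mulVec (v i)) := by
  intro ω v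
  set A := R₂ * R₁ᵀ
  set S := T₂ - A * T₁ * Aᵀ
  have hAO : A * Aᵀ = 1 := mul_transpose_mul_transpose_self hR₁ hR₂
  have hAR₁ : A * R₁ = R₂ := by rw [Matrix.mul_assoc, mul_eq_one_comm.mp hR₁, Matrix.mul_one]
  have hS : Sᵀ = -S := by
    rw [transpose_sub, hT₂, transpose_conj_of_transpose_eq_neg A hT₁, neg_sub_neg, neg_sub]
  have hST : S + A * T₁ * Aᵀ = T₂ := sub_add_cancel _ _
  rw [← hf A S hAO (det_mul_transpose_of_det_eq_neg_one hdet₁ hdet₂) hS]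
  congr 1 <;> funext i
  · rw [mulVec_mulVec, hAR₁]
  · rw [mulVec_adjoint_comp (mul_eq_one_comm.mp hAO), hST, hAR₁]
end
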